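/- arXiv:2603.23681 — 3 statements merged into one kernel-verified Lean document; each statement's English description precedes it below -/
import Mathlib

section
/- For all integers k, l with k ≥ 2 and l ≥ 2, the theta graph Θ(1, 2k, 2l+1) is of QE class. -/
/-- Vertex set of the theta graph `Θ(α,β,γ)`: the interior vertices of the three
paths, plus the two common endpoints (`Sum.inr false` = start, `Sum.inr true` = end). -/
abbrev ThetaV (α β γ : ℕ) : Type :=
  (Fin (α - 1) ⊕ Fin (β - 1) ⊕ Fin (γ - 1)) ⊕ Bool

/-- The position of a vertex along branch `b` (if the vertex lies on that branch). -/
def onBranch (α β γ : ℕ) (v : ThetaV α β γ) (b : Fin 3) : Option ℕ :=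
  match v with
  | Sum.inr false => some 0
  | Sum.inr true => some (if b = 0 then α else if b = 1 then β else γ)
  | Sum.inl (Sum.inl i) => if b = 0 then some (i.1 + 1) else none
  | Sum.inl (Sum.inr (Sum.inl j)) => if b = 1 then some (j.1 + 1) else none
  | Sum.inl (Sum.inr (Sum.inr m)) => if b = 2 then some (m.1 + 1) else none

/-- The theta graph `Θ(α,β,γ)`: union of three paths of lengths `α`, `β`, `γ`
with common endpoints. Two vertices are adjacent iff they lie on a common branch
at consecutive positions. -/
def thetaGraph (α β γ : ℕ) : SimpleGraph (ThetaV α β γ) where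
  Adj u v := u ≠ v ∧ ∃ b p q, onBranch α β γ u b = some p ∧
      onBranch α β γ v b = some q ∧ (p + 1 = q ∨ q + 1 = p)
  symm := by
    constructor
    rintro u v ⟨hne, b, p, q, hu, hv, h⟩
    exact ⟨hne.symm, b, q, p, hv, hu, h.symm⟩
  loopless := by constructor; rintro u ⟨hne, -⟩; exact hne rfl

/-- A finite graph is of QE class if it admits a quadratic embedding into
Euclidean space: `‖φ x - φ y‖² = d_G(x,y)` for all vertices `x, y`. -/
def IsQEClass {V : Type*} [Fintype V] (G : SimpleGraph V) : Prop :=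
  ∃ φ : V → EuclideanSpace ℝ (Fin (Fintype.card V)),
    ∀ x y : V, ‖φ x - φ y‖ ^ 2 = (G.dist x y : ℝ)


namespace ThetaQEProof

def sep (a b m m' : ℕ) : ℕ := if ((a ≤ m ∧ m ≤ b) ↔ (a ≤ m' ∧ m' ≤ b)) then 0 else 1

def famCount (b L m m' : ℕ) : ℕ :=
  ((min m b - (m - (L+1))) - (min m b - (m' - (L+1))))
  + ((min m' b - (m' - (L+1))) - (min m b - (m' - (L+1))))

lemma sep_comm (a b m m' : ℕ) : sep a b m m' = sep a b m' m := by
  unfold sep; split_ifs <;> omega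

lemma sep_refl (a b m : ℕ) : sep a b m m = 0 := by
  unfold sep; split_ifs <;> omega

lemma sep_tri (a b x y z : ℕ) : sep a b x z ≤ sep a b x y + sep a b y z := by
  unfold sep; split_ifs <;> omega

lemma famEval (L m m' : ℕ) (h : m ≤ m') :
    ∀ b, ∑ a ∈ Finset.range b, sep (a+1) (a+1+L) m m' = famCount b L m m' := by
  intro b
  induction b with
  | zero => simp only [Finset.range_zero, Finset.sum_empty]; unfold famCount; omega
  | succ b ih =>
      rw [Finset.sum_range_succ, ih]
      unfold sep famCount
      split_ifs <;> omega

def PW1 (k l m m' : ℕ) : ℕ :=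
  if m + 2 ≤ k then
    (if m' + 2 ≤ k then m' - m else if m' + 1 = k then m' - m
     else if m' = k then m' - m
     else if m' ≤ 2*k then (if m' - m ≤ k then m' - m else m + 2*k - m')
     else if m' ≤ 2*k + l then m else m)
  else if m + 1 = k then
    (if m' + 1 = k then 0 else if m' = k then 1
     else if m' ≤ 2*k then (if m' - m ≤ k - 1 then m' - m else 2 + 3*m - m')
     else if m' ≤ 2*k + l then m else m)
  else if m = k then
    (if m' = k then 0 else if m' ≤ 2*k then m' - m
     else if m' ≤ 2*k + l then m else m)
  else if m ≤ 2*k then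
    (if m' ≤ 2*k then m' - m else if m' ≤ 2*k + l then 2*k - m else 2*k - m)
  else if m ≤ 2*k + l then
    (if m' ≤ 2*k + l then 0 else (if m' - m ≤ l then 0 else 0))
  else 0

def PW2 (k l m m' : ℕ) : ℕ :=
  if m + 2 ≤ k then
    (if m' + 2 ≤ k then m' - m else if m' + 1 = k then m' - m
     else if m' = k then m' - 1 - m
     else if m' ≤ 2*k then (if m' - m ≤ k then m' - 2 - m else m + 2*k - m')
     else if m' ≤ 2*k + l then m else m)
  else if m + 1 = k then
    (if m' + 1 = k then 0 else if m' = k then 0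
     else if m' ≤ 2*k then (if m' - m ≤ k - 1 then m' - 2 - m else m' - 2 - m)
     else if m' ≤ 2*k + l then m else m)
  else if m = k then
    (if m' = k then 0 else if m' ≤ 2*k then m' - 1 - m
     else if m' ≤ 2*k + l then m - 1 else m - 1)
  else if m ≤ 2*k then
    (if m' ≤ 2*k then m' - m else if m' ≤ 2*k + l then 2*k - m else 2*k - m)
  else if m ≤ 2*k + l then
    (if m' ≤ 2*k + l then 0 else (if m' - m ≤ l then 0 else 0))
  else 0

def PW3 (k l m m' : ℕ) : ℕ :=
  if m + 2 ≤ k then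
    (if m' + 2 ≤ k then 0 else if m' + 1 = k then 0
     else if m' = k then 0
     else if m' ≤ 2*k then (if m' - m ≤ k then 0 else 0)
     else if m' ≤ 2*k + l then m' - 2*k else 1 + 2*k + 2*l - m')
  else if m + 1 = k then
    (if m' + 1 = k then 0 else if m' = k then 0
     else if m' ≤ 2*k then (if m' - m ≤ k - 1 then 0 else 0)
     else if m' ≤ 2*k + l then m' - 2 - 2*m else 3 + 2*m + 2*l - m')
  else if m = k then
    (if m' = k then 0 else if m' ≤ 2*k then 0
     else if m' ≤ 2*k + l then m' - 2*m else 1 + 2*m + 2*l - m')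
  else if m ≤ 2*k then
    (if m' ≤ 2*k then 0 else if m' ≤ 2*k + l then m' - 2*k else 1 + 2*k + 2*l - m')
  else if m ≤ 2*k + l then
    (if m' ≤ 2*k + l then m' - m else (if m' - m ≤ l then m' - 1 - m else 1 + m + 2*l - m'))
  else m' - m

def PW (k l m m' : ℕ) : ℕ :=
  if m + 2 ≤ k then
    (if m' + 2 ≤ k then 2*m' - 2*m else if m' + 1 = k then 2*m' - 2*m
     else if m' = k then 2*m' - 2*m
     else if m' ≤ 2*k then (if m' - m ≤ k then 2*m' - 2*m else 2 + 2*m + 4*k - 2*m')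
     else if m' ≤ 2*k + l then 2 + 2*m + 2*m' - 4*k else 2 + 2*m + 4*k + 4*l - 2*m')
  else if m + 1 = k then
    (if m' + 1 = k then 0 else if m' = k then 2
     else if m' ≤ 2*k then (if m' - m ≤ k - 1 then 2*m' - 2*m else 2 + 2*m)
     else if m' ≤ 2*k + l then 2*m' - 2 - 2*m else 6 + 6*m + 4*l - 2*m')
  else if m = k then
    (if m' = k then 0 else if m' ≤ 2*k then 2*m' - 2*m
     else if m' ≤ 2*k + l then 2*m' - 2*m else 2 + 6*m + 4*l - 2*m')
  else if m ≤ 2*k then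
    (if m' ≤ 2*k then 2*m' - 2*m else if m' ≤ 2*k + l then 2*m' - 2*m else 4 + 8*k + 4*l - 2*m - 2*m')
  else if m ≤ 2*k + l then
    (if m' ≤ 2*k + l then 2*m' - 2*m else (if m' - m ≤ l then 2*m' - 2*m else 4 + 2*m + 4*l - 2*m'))
  else 2*m' - 2*m

set_option maxHeartbeats 2000000 in
lemma E1 (k l m m' : ℕ) (hk : 2 ≤ k) (hl : 2 ≤ l) (h : m ≤ m') (hm' : m' ≤ 2*k+2*l) :
    famCount k (k-1) m m' = PW1 k l m m' := by
  unfold famCount PW1; split_ifs <;> omega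

set_option maxHeartbeats 2000000 in
lemma E2 (k l m m' : ℕ) (hk : 2 ≤ k) (hl : 2 ≤ l) (h : m ≤ m') (hm' : m' ≤ 2*k+2*l) :
    famCount (k-1) k m m' = PW2 k l m m' := by
  unfold famCount PW2; split_ifs <;> omega

set_option maxHeartbeats 2000000 in
lemma E3 (k l m m' : ℕ) (hk : 2 ≤ k) (hl : 2 ≤ l) (h : m ≤ m') (hm' : m' ≤ 2*k+2*l) :
    famCount l l (m - 2*k) (m' - 2*k) = PW3 k l m m' := by
  unfold famCount PW3; split_ifs <;> omega

set_option maxHeartbeats 2000000 in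
lemma PW_sum (k l m m' : ℕ) (hk : 2 ≤ k) (hl : 2 ≤ l) (h : m ≤ m') (hm' : m' ≤ 2*k+2*l) :
    PW1 k l m m' + PW2 k l m m' + 2 * PW3 k l m m'
      + sep k (2*k+l) m m' + sep (k+1) (2*k+l) m m' = PW k l m m' := by
  unfold sep PW1 PW2 PW3 PW; split_ifs <;> omega

set_option maxHeartbeats 1000000 in
lemma PW_edge (k l m : ℕ) (hk : 2 ≤ k) (hl : 2 ≤ l) (hm : m+1 ≤ 2*k+2*l) :
    PW k l m (m+1) = 2 := by
  unfold PW; split_ifs <;> omega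

lemma PW_wrap (k l : ℕ) (hk : 2 ≤ k) (hl : 2 ≤ l) : PW k l 0 (2*k+2*l) = 2 := by
  unfold PW; split_ifs <;> omega

lemma PW_chord (k l : ℕ) (hk : 2 ≤ k) (hl : 2 ≤ l) : PW k l 0 (2*k) = 2 := by
  unfold PW; split_ifs <;> omega


def wC (k l i : ℕ) : ℕ :=
  if i < 2*k-1 then 1 else if i < 2*k-1+l then 2 else if i < 2*k+l+1 then 1 else 0

def loC (k l i : ℕ) : ℕ :=
  if i < k then i+1 else if i < 2*k-1 then i+1-k else if i < 2*k-1+l then i+2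
  else if i = 2*k+l-1 then k else if i = 2*k+l then k+1 else 1

def hiC (k l i : ℕ) : ℕ :=
  if i < k then i+k else if i < 2*k-1 then i+1 else if i < 2*k-1+l then i+2+l
  else if i ≤ 2*k+l then 2*k+l else 0

def T (k l m m' : ℕ) : ℕ :=
  ∑ i ∈ Finset.range (2*k+2*l+1), wC k l i * sep (loC k l i) (hiC k l i) m m'

lemma pw1 (k l m m' i : ℕ) (hk : 2 ≤ k) (hi : i < k) :
    wC k l i * sep (loC k l i) (hiC k l i) m m' = sep (i+1) (i+1+(k-1)) m m' := by
  unfold wC loC hiC sep; split_ifs <;> omega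

lemma pw2 (k l m m' i : ℕ) (hk : 2 ≤ k) (hi : i < k-1) :
    wC k l (k+i) * sep (loC k l (k+i)) (hiC k l (k+i)) m m' = sep (i+1) (i+1+k) m m' := by
  unfold wC loC hiC sep; split_ifs <;> omega

lemma pw3 (k l m m' i : ℕ) (hk : 2 ≤ k) (hl : 2 ≤ l) (hi : i < l) :
    wC k l (2*k-1+i) * sep (loC k l (2*k-1+i)) (hiC k l (2*k-1+i)) m m'
      = 2 * sep (i+1) (i+1+l) (m - 2*k) (m' - 2*k) := by
  unfold wC loC hiC sep; split_ifs <;> omega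

lemma pw4a (k l m m' : ℕ) (hk : 2 ≤ k) (hl : 2 ≤ l) :
    wC k l (2*k-1+l) * sep (loC k l (2*k-1+l)) (hiC k l (2*k-1+l)) m m'
      = sep k (2*k+l) m m' := by
  unfold wC loC hiC sep; split_ifs <;> omega

lemma pw4b (k l m m' : ℕ) (hk : 2 ≤ k) (hl : 2 ≤ l) :
    wC k l (2*k-1+l+1) * sep (loC k l (2*k-1+l+1)) (hiC k l (2*k-1+l+1)) m m'
      = sep (k+1) (2*k+l) m m' := by
  unfold wC loC hiC sep; split_ifs <;> omega

lemma pw5 (k l m m' i : ℕ) (hk : 2 ≤ k) (hl : 2 ≤ l) (hi : 2*k+l+1 ≤ i) :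
    wC k l i * sep (loC k l i) (hiC k l i) m m' = 0 := by
  unfold wC loC hiC sep; split_ifs <;> omega

lemma T_famsum (k l m m' : ℕ) (hk : 2 ≤ k) (hl : 2 ≤ l) (h : m ≤ m') :
    T k l m m' = famCount k (k-1) m m' + famCount (k-1) k m m'
      + 2 * famCount l l (m - 2*k) (m' - 2*k)
      + sep k (2*k+l) m m' + sep (k+1) (2*k+l) m m' := by
  unfold T
  rw [Finset.range_eq_Ico,
    ← Finset.sum_Ico_consecutive _ (show 0 ≤ k by omega) (show k ≤ 2*k+2*l+1 by omega),
    ← Finset.sum_Ico_consecutive _ (show k ≤ 2*k-1 by omega) (show 2*k-1 ≤ 2*k+2*l+1 by omega),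
    ← Finset.sum_Ico_consecutive _ (show 2*k-1 ≤ 2*k-1+l by omega)
        (show 2*k-1+l ≤ 2*k+2*l+1 by omega),
    ← Finset.sum_Ico_consecutive _ (show 2*k-1+l ≤ 2*k-1+l+2 by omega)
        (show 2*k-1+l+2 ≤ 2*k+2*l+1 by omega)]
  have b1 : ∑ i ∈ Finset.Ico 0 k, wC k l i * sep (loC k l i) (hiC k l i) m m'
      = famCount k (k-1) m m' := by
    rw [Finset.sum_Ico_eq_sum_range]
    simp only [Nat.sub_zero, Nat.zero_add]
    rw [Finset.sum_congr rfl fun i hi => pw1 k l m m' i hk (Finset.mem_range.mp hi)]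
    exact famEval (k-1) m m' h k
  have b2 : ∑ i ∈ Finset.Ico k (2*k-1), wC k l i * sep (loC k l i) (hiC k l i) m m'
      = famCount (k-1) k m m' := by
    rw [Finset.sum_Ico_eq_sum_range]
    rw [show 2*k-1-k = k-1 by omega]
    rw [Finset.sum_congr rfl fun i hi => pw2 k l m m' i hk (Finset.mem_range.mp hi)]
    exact famEval k m m' h (k-1)
  have b3 : ∑ i ∈ Finset.Ico (2*k-1) (2*k-1+l), wC k l i * sep (loC k l i) (hiC k l i) m m'
      = 2 * famCount l l (m - 2*k) (m' - 2*k) := by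
    rw [Finset.sum_Ico_eq_sum_range]
    rw [show 2*k-1+l-(2*k-1) = l by omega]
    rw [Finset.sum_congr rfl fun i hi => pw3 k l m m' i hk hl (Finset.mem_range.mp hi)]
    rw [← Finset.mul_sum]
    rw [famEval l (m - 2*k) (m' - 2*k) (Nat.sub_le_sub_right h _) l]
  have b4 : ∑ i ∈ Finset.Ico (2*k-1+l) (2*k-1+l+2),
        wC k l i * sep (loC k l i) (hiC k l i) m m'
      = sep k (2*k+l) m m' + sep (k+1) (2*k+l) m m' := by
    rw [show 2*k-1+l+2 = (2*k-1+l+1)+1 by omega,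
      Finset.sum_Ico_succ_top (by omega), Finset.sum_Ico_succ_top (by omega),
      Finset.Ico_self, Finset.sum_empty, pw4a k l m m' hk hl, pw4b k l m m' hk hl]
    ring
  have b5 : ∑ i ∈ Finset.Ico (2*k-1+l+2) (2*k+2*l+1),
        wC k l i * sep (loC k l i) (hiC k l i) m m' = 0 := by
    refine Finset.sum_eq_zero fun i hi => ?_
    exact pw5 k l m m' i hk hl (by have := (Finset.mem_Ico.mp hi).1; omega)
  rw [b1, b2, b3, b4, b5]
  ring

lemma T_PW (k l m m' : ℕ) (hk : 2 ≤ k) (hl : 2 ≤ l) (h : m ≤ m') (hm' : m' ≤ 2*k+2*l) :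
    T k l m m' = PW k l m m' := by
  rw [T_famsum k l m m' hk hl h, E1 k l m m' hk hl h hm', E2 k l m m' hk hl h hm',
    E3 k l m m' hk hl h hm', PW_sum k l m m' hk hl h hm']

lemma T_comm (k l m m' : ℕ) : T k l m m' = T k l m' m := by
  unfold T
  exact Finset.sum_congr rfl fun i _ => by rw [sep_comm]

lemma T_refl (k l m : ℕ) : T k l m m = 0 := by
  unfold T
  exact Finset.sum_eq_zero fun i _ => by rw [sep_refl, Nat.mul_zero]

lemma T_tri (k l x y z : ℕ) : T k l x z ≤ T k l x y + T k l y z := by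
  unfold T
  rw [← Finset.sum_add_distrib]
  refine Finset.sum_le_sum fun i _ => ?_
  rw [← Nat.mul_add]
  exact Nat.mul_le_mul_left _ (sep_tri _ _ _ _ _)


lemma fin3cases : ∀ b : Fin 3, b = 0 ∨ b = 1 ∨ b = 2 := by decide

def lab (k l : ℕ) : ThetaV 1 (2*k) (2*l+1) → ℕ
  | Sum.inr false => 0
  | Sum.inr true => 2*k
  | Sum.inl (Sum.inl i) => i.elim0
  | Sum.inl (Sum.inr (Sum.inl j)) => j.1 + 1
  | Sum.inl (Sum.inr (Sum.inr jm)) => 2*k + 2*l - jm.1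

def vtx (k l : ℕ) (m : ℕ) : ThetaV 1 (2*k) (2*l+1) :=
  if h1 : 1 ≤ m ∧ m ≤ 2*k-1 then Sum.inl (Sum.inr (Sum.inl ⟨m-1, by omega⟩))
  else if h2 : 2*k+1 ≤ m ∧ m ≤ 2*k+2*l then
    Sum.inl (Sum.inr (Sum.inr ⟨2*k+2*l-m, by omega⟩))
  else if m = 2*k then Sum.inr true
  else Sum.inr false

section OnB
variable {k l : ℕ}

lemma vtx_beta {m : ℕ} (h : 1 ≤ m ∧ m ≤ 2*k-1) :
    vtx k l m = Sum.inl (Sum.inr (Sum.inl ⟨m-1, by omega⟩)) := by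
  unfold vtx; rw [dif_pos h]

lemma vtx_gamma {m : ℕ} (h : 2*k+1 ≤ m ∧ m ≤ 2*k+2*l) :
    vtx k l m = Sum.inl (Sum.inr (Sum.inr ⟨2*k+2*l-m, by omega⟩)) := by
  unfold vtx; rw [dif_neg (by omega), dif_pos h]

lemma vtx_zero (hk : 1 ≤ k) : vtx k l 0 = Sum.inr false := by
  unfold vtx; rw [dif_neg (by omega), dif_neg (by omega), if_neg (by omega)]

lemma vtx_top (hk : 1 ≤ k) : vtx k l (2*k) = Sum.inr true := by
  unfold vtx; rw [dif_neg (by omega), dif_neg (by omega), if_pos rfl]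

lemma onB_s (b : Fin 3) : onBranch 1 (2*k) (2*l+1) (Sum.inr false) b = some 0 := rfl

lemma onB_t0 : onBranch 1 (2*k) (2*l+1) (Sum.inr true) 0 = some 1 := rfl
lemma onB_t1 : onBranch 1 (2*k) (2*l+1) (Sum.inr true) 1 = some (2*k) := rfl
lemma onB_t2 : onBranch 1 (2*k) (2*l+1) (Sum.inr true) 2 = some (2*l+1) := rfl

lemma onB_b0 (j : Fin (2*k-1)) :
    onBranch 1 (2*k) (2*l+1) (Sum.inl (Sum.inr (Sum.inl j))) 0 = none := rfl
lemma onB_b1 (j : Fin (2*k-1)) :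
    onBranch 1 (2*k) (2*l+1) (Sum.inl (Sum.inr (Sum.inl j))) 1 = some (j.1+1) := rfl
lemma onB_b2 (j : Fin (2*k-1)) :
    onBranch 1 (2*k) (2*l+1) (Sum.inl (Sum.inr (Sum.inl j))) 2 = none := rfl

lemma onB_g0 (j : Fin (2*l+1-1)) :
    onBranch 1 (2*k) (2*l+1) (Sum.inl (Sum.inr (Sum.inr j))) 0 = none := rfl
lemma onB_g1 (j : Fin (2*l+1-1)) :
    onBranch 1 (2*k) (2*l+1) (Sum.inl (Sum.inr (Sum.inr j))) 1 = none := rfl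
lemma onB_g2 (j : Fin (2*l+1-1)) :
    onBranch 1 (2*k) (2*l+1) (Sum.inl (Sum.inr (Sum.inr j))) 2 = some (j.1+1) := rfl

end OnB

lemma lab_le (k l : ℕ) (hk : 2 ≤ k) (hl : 2 ≤ l) (x : ThetaV 1 (2*k) (2*l+1)) :
    lab k l x ≤ 2*k+2*l := by
  rcases x with ((i | j | jm) | b)
  · exact i.elim0
  · have := j.2; simp only [lab]; omega
  · simp only [lab]; omega
  · cases b <;> simp only [lab] <;> omega

lemma lab_vtx (k l m : ℕ) (hk : 2 ≤ k) (hm : m ≤ 2*k+2*l) : lab k l (vtx k l m) = m := by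
  unfold vtx
  split_ifs with h1 h2 h3 <;> simp only [lab] <;> omega

lemma vtx_lab (k l : ℕ) (hk : 2 ≤ k) (hl : 2 ≤ l) (x : ThetaV 1 (2*k) (2*l+1)) :
    vtx k l (lab k l x) = x := by
  rcases x with ((i | j | jm) | b)
  · exact i.elim0
  · have hj := j.2
    simp only [lab]
    rw [vtx_beta (by omega)]
    simp only [Sum.inl.injEq, Sum.inr.injEq]
    exact Fin.ext (by simp)
  · have hj := jm.2
    simp only [lab]
    rw [vtx_gamma (by omega)]
    simp only [Sum.inl.injEq, Sum.inr.injEq]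
    exact Fin.ext (by simp; omega)
  · cases b
    · simp only [lab]; exact vtx_zero (by omega)
    · simp only [lab]; exact vtx_top (by omega)

lemma vtx_ne (k l a b : ℕ) (hk : 2 ≤ k) (ha : a ≤ 2*k+2*l) (hb : b ≤ 2*k+2*l)
    (hne : a ≠ b) : vtx k l a ≠ vtx k l b := fun h => by
  have h2 := congrArg (lab k l) h
  rw [lab_vtx k l a hk ha, lab_vtx k l b hk hb] at h2
  exact hne h2

lemma adj_consec (k l m : ℕ) (hk : 2 ≤ k) (hl : 2 ≤ l) (hm : m+1 ≤ 2*k+2*l) :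
    (thetaGraph 1 (2*k) (2*l+1)).Adj (vtx k l m) (vtx k l (m+1)) := by
  refine ⟨vtx_ne k l m (m+1) hk (by omega) (by omega) (by omega), ?_⟩
  rcases (by omega :
      m = 0 ∨ (1 ≤ m ∧ m+1 ≤ 2*k-1) ∨ m+1 = 2*k ∨ m = 2*k ∨ 2*k+1 ≤ m) with
    h | h | h | h | h
  · refine ⟨1, 0, (m+1)-1+1, ?_, ?_, Or.inl (by omega)⟩
    · rw [h, vtx_zero (by omega), onB_s]
    · rw [vtx_beta (by omega), onB_b1]
  · refine ⟨1, m-1+1, (m+1)-1+1, ?_, ?_, Or.inl (by omega)⟩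
    · rw [vtx_beta (by omega), onB_b1]
    · rw [vtx_beta (by omega), onB_b1]
  · refine ⟨1, m-1+1, 2*k, ?_, ?_, Or.inl (by omega)⟩
    · rw [vtx_beta (by omega), onB_b1]
    · rw [show m+1 = 2*k from h, vtx_top (by omega), onB_t1]
  · refine ⟨2, 2*l+1, (2*k+2*l-(m+1))+1, ?_, ?_, Or.inr (by omega)⟩
    · rw [h, vtx_top (by omega), onB_t2]
    · rw [vtx_gamma (by omega), onB_g2]
  · refine ⟨2, (2*k+2*l-m)+1, (2*k+2*l-(m+1))+1, ?_, ?_, Or.inr (by omega)⟩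
    · rw [vtx_gamma (by omega), onB_g2]
    · rw [vtx_gamma (by omega), onB_g2]

lemma adj_wrap (k l : ℕ) (hk : 2 ≤ k) (hl : 2 ≤ l) :
    (thetaGraph 1 (2*k) (2*l+1)).Adj (vtx k l 0) (vtx k l (2*k+2*l)) := by
  refine ⟨vtx_ne k l 0 (2*k+2*l) hk (by omega) (by omega) (by omega),
    2, 0, (2*k+2*l-(2*k+2*l))+1, ?_, ?_, Or.inl (by omega)⟩
  · rw [vtx_zero (by omega), onB_s]
  · rw [vtx_gamma (by omega), onB_g2]

lemma adj_chord (k l : ℕ) (hk : 2 ≤ k) (hl : 2 ≤ l) :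
    (thetaGraph 1 (2*k) (2*l+1)).Adj (vtx k l 0) (vtx k l (2*k)) := by
  refine ⟨vtx_ne k l 0 (2*k) hk (by omega) (by omega) (by omega),
    0, 0, 1, ?_, ?_, Or.inl (by omega)⟩
  · rw [vtx_zero (by omega), onB_s]
  · rw [vtx_top (by omega), onB_t0]

lemma adj_lab (k l : ℕ) (hk : 2 ≤ k) (hl : 2 ≤ l) {u v : ThetaV 1 (2*k) (2*l+1)}
    (h : (thetaGraph 1 (2*k) (2*l+1)).Adj u v) :
    (lab k l u + 1 = lab k l v ∨ lab k l v + 1 = lab k l u)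
    ∨ (lab k l u = 0 ∧ lab k l v = 2*k) ∨ (lab k l v = 0 ∧ lab k l u = 2*k)
    ∨ (lab k l u = 0 ∧ lab k l v = 2*k+2*l) ∨ (lab k l v = 0 ∧ lab k l u = 2*k+2*l) := by
  obtain ⟨hne, b, p, q, hu, hv, hpq⟩ := h
  rcases u with ((i | j | jm) | bu)
  · exact i.elim0
  all_goals rcases v with ((i' | j' | jm') | bv)
  all_goals try exact Fin.elim0 (by assumption)
  all_goals try cases bu
  all_goals try cases bv
  all_goals rcases fin3cases b with hb | hb | hb
  all_goals subst hb
  all_goals simp only [onB_s, onB_t0, onB_t1, onB_t2, onB_b0, onB_b1, onB_b2,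
    onB_g0, onB_g1, onB_g2, Option.some.injEq, reduceCtorEq] at hu hv
  all_goals simp only [lab]
  all_goals try (have hj2 := j.2)
  all_goals try (have hj2' := j'.2)
  all_goals try (have hm2 := jm.2)
  all_goals try (have hm2' := jm'.2)
  all_goals try omega
  all_goals simp_all
  all_goals omega


lemma walkUp (k l : ℕ) (hk : 2 ≤ k) (hl : 2 ≤ l) :
    ∀ d a : ℕ, a + d ≤ 2*k+2*l →
      ∃ w : (thetaGraph 1 (2*k) (2*l+1)).Walk (vtx k l a) (vtx k l (a+d)), w.length = d := by
  intro d
  induction d with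
  | zero =>
      intro a _
      refine ⟨SimpleGraph.Walk.nil.copy rfl (congrArg (vtx k l) (Nat.add_zero a).symm), ?_⟩
      simp [SimpleGraph.Walk.length_copy]
  | succ d ih =>
      intro a ha
      obtain ⟨w, hw⟩ := ih a (by omega)
      refine ⟨w.concat (adj_consec k l (a+d) hk hl (by omega)), ?_⟩
      rw [SimpleGraph.Walk.length_concat, hw]

lemma walkBetween (k l : ℕ) (hk : 2 ≤ k) (hl : 2 ≤ l) (a b : ℕ) (hab : a ≤ b)
    (hb : b ≤ 2*k+2*l) :
    ∃ w : (thetaGraph 1 (2*k) (2*l+1)).Walk (vtx k l a) (vtx k l b), w.length = b - a := by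
  obtain ⟨w, hw⟩ := walkUp k l hk hl (b-a) a (by omega)
  have he : a + (b-a) = b := by omega
  refine ⟨w.copy rfl (congrArg (vtx k l) he), ?_⟩
  rw [SimpleGraph.Walk.length_copy]
  omega

lemma dist_upper (k l m m' : ℕ) (hk : 2 ≤ k) (hl : 2 ≤ l) (h : m ≤ m') (hm' : m' ≤ 2*k+2*l) :
    2 * (thetaGraph 1 (2*k) (2*l+1)).dist (vtx k l m) (vtx k l m') ≤ PW k l m m' := by
  have R1 : (thetaGraph 1 (2*k) (2*l+1)).dist (vtx k l m) (vtx k l m') ≤ m' - m := by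
    obtain ⟨w, hw⟩ := walkBetween k l hk hl m m' h hm'
    have := SimpleGraph.dist_le w; omega
  have R2 : (thetaGraph 1 (2*k) (2*l+1)).dist (vtx k l m) (vtx k l m')
      ≤ m + 1 + (2*k+2*l - m') := by
    obtain ⟨w1, h1⟩ := walkBetween k l hk hl 0 m (by omega) (by omega)
    obtain ⟨w3, h3⟩ := walkBetween k l hk hl m' (2*k+2*l) hm' (le_refl _)
    have := SimpleGraph.dist_le
      (w1.reverse.append (SimpleGraph.Walk.cons (adj_wrap k l hk hl) w3.reverse))
    simp only [SimpleGraph.Walk.length_append, SimpleGraph.Walk.length_cons,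
      SimpleGraph.Walk.length_reverse] at this
    omega
  have R3 : 2*k ≤ m' → (thetaGraph 1 (2*k) (2*l+1)).dist (vtx k l m) (vtx k l m')
      ≤ m + 1 + (m' - 2*k) := by
    intro hc
    obtain ⟨w1, h1⟩ := walkBetween k l hk hl 0 m (by omega) (by omega)
    obtain ⟨w3, h3⟩ := walkBetween k l hk hl (2*k) m' hc hm'
    have := SimpleGraph.dist_le
      (w1.reverse.append (SimpleGraph.Walk.cons (adj_chord k l hk hl) w3))
    simp only [SimpleGraph.Walk.length_append, SimpleGraph.Walk.length_cons,
      SimpleGraph.Walk.length_reverse] at this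
    omega
  have R4 : m' ≤ 2*k → (thetaGraph 1 (2*k) (2*l+1)).dist (vtx k l m) (vtx k l m')
      ≤ m + 1 + (2*k - m') := by
    intro hc
    obtain ⟨w1, h1⟩ := walkBetween k l hk hl 0 m (by omega) (by omega)
    obtain ⟨w3, h3⟩ := walkBetween k l hk hl m' (2*k) hc (by omega)
    have := SimpleGraph.dist_le
      (w1.reverse.append (SimpleGraph.Walk.cons (adj_chord k l hk hl) w3.reverse))
    simp only [SimpleGraph.Walk.length_append, SimpleGraph.Walk.length_cons,
      SimpleGraph.Walk.length_reverse] at this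
    omega
  have R5 : m ≤ 2*k → (thetaGraph 1 (2*k) (2*l+1)).dist (vtx k l m) (vtx k l m')
      ≤ (2*k - m) + 2 + (2*k+2*l - m') := by
    intro hc
    obtain ⟨w1, h1⟩ := walkBetween k l hk hl m (2*k) hc (by omega)
    obtain ⟨w3, h3⟩ := walkBetween k l hk hl m' (2*k+2*l) hm' (le_refl _)
    have := SimpleGraph.dist_le
      (w1.append (SimpleGraph.Walk.cons (adj_chord k l hk hl).symm
        (SimpleGraph.Walk.cons (adj_wrap k l hk hl) w3.reverse)))
    simp only [SimpleGraph.Walk.length_append, SimpleGraph.Walk.length_cons,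
      SimpleGraph.Walk.length_reverse] at this
    omega
  have R6 : 2*k ≤ m → (thetaGraph 1 (2*k) (2*l+1)).dist (vtx k l m) (vtx k l m')
      ≤ (m - 2*k) + 2 + (2*k+2*l - m') := by
    intro hc
    obtain ⟨w1, h1⟩ := walkBetween k l hk hl (2*k) m hc (by omega)
    obtain ⟨w3, h3⟩ := walkBetween k l hk hl m' (2*k+2*l) hm' (le_refl _)
    have := SimpleGraph.dist_le
      (w1.reverse.append (SimpleGraph.Walk.cons (adj_chord k l hk hl).symm
        (SimpleGraph.Walk.cons (adj_wrap k l hk hl) w3.reverse)))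
    simp only [SimpleGraph.Walk.length_append, SimpleGraph.Walk.length_cons,
      SimpleGraph.Walk.length_reverse] at this
    omega
  unfold PW
  split_ifs
  all_goals try have hr3 := R3 (by omega)
  all_goals try have hr4 := R4 (by omega)
  all_goals try have hr5 := R5 (by omega)
  all_goals try have hr6 := R6 (by omega)
  all_goals omega

lemma T_adj (k l : ℕ) (hk : 2 ≤ k) (hl : 2 ≤ l) {u v : ThetaV 1 (2*k) (2*l+1)}
    (h : (thetaGraph 1 (2*k) (2*l+1)).Adj u v) : T k l (lab k l u) (lab k l v) = 2 := by
  have hu := lab_le k l hk hl u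
  have hv := lab_le k l hk hl v
  rcases adj_lab k l hk hl h with (hc | hc) | ⟨h0, h1⟩ | ⟨h0, h1⟩ | ⟨h0, h1⟩ | ⟨h0, h1⟩
  · rw [T_PW k l _ _ hk hl (by omega) (by omega), ← hc]
    exact PW_edge k l (lab k l u) hk hl (by omega)
  · rw [T_comm, T_PW k l _ _ hk hl (by omega) (by omega), ← hc]
    exact PW_edge k l (lab k l v) hk hl (by omega)
  · rw [h0, h1, T_PW k l _ _ hk hl (by omega) (by omega)]
    exact PW_chord k l hk hl
  · rw [h0, h1, T_comm, T_PW k l _ _ hk hl (by omega) (by omega)]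
    exact PW_chord k l hk hl
  · rw [h0, h1, T_PW k l _ _ hk hl (by omega) (by omega)]
    exact PW_wrap k l hk hl
  · rw [h0, h1, T_comm, T_PW k l _ _ hk hl (by omega) (by omega)]
    exact PW_wrap k l hk hl

lemma T_le_two_len (k l : ℕ) (hk : 2 ≤ k) (hl : 2 ≤ l) :
    ∀ {u v : ThetaV 1 (2*k) (2*l+1)} (w : (thetaGraph 1 (2*k) (2*l+1)).Walk u v),
      T k l (lab k l u) (lab k l v) ≤ 2 * w.length := by
  intro u v w
  induction w with
  | nil => rw [T_refl]; omega
  | @cons a b c hab p ih =>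
      have h1 := T_tri k l (lab k l a) (lab k l b) (lab k l c)
      have h2 := T_adj k l hk hl hab
      rw [SimpleGraph.Walk.length_cons]
      omega

lemma two_dist (k l m m' : ℕ) (hk : 2 ≤ k) (hl : 2 ≤ l) (h : m ≤ m') (hm' : m' ≤ 2*k+2*l) :
    2 * (thetaGraph 1 (2*k) (2*l+1)).dist (vtx k l m) (vtx k l m') = T k l m m' := by
  have hub := dist_upper k l m m' hk hl h hm'
  have hr : (thetaGraph 1 (2*k) (2*l+1)).Reachable (vtx k l m) (vtx k l m') := by
    obtain ⟨w, _⟩ := walkBetween k l hk hl m m' h hm'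
    exact ⟨w⟩
  obtain ⟨p, hp⟩ := hr.exists_walk_length_eq_dist
  have hlb := T_le_two_len k l hk hl p
  rw [lab_vtx k l m hk (by omega), lab_vtx k l m' hk hm'] at hlb
  rw [T_PW k l m m' hk hl h hm'] at hlb ⊢
  omega

lemma dist_T (k l : ℕ) (hk : 2 ≤ k) (hl : 2 ≤ l) (x y : ThetaV 1 (2*k) (2*l+1)) :
    2 * (thetaGraph 1 (2*k) (2*l+1)).dist x y = T k l (lab k l x) (lab k l y) := by
  rcases le_total (lab k l x) (lab k l y) with h | h
  · have h2 := two_dist k l (lab k l x) (lab k l y) hk hl h (lab_le k l hk hl y)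
    rwa [vtx_lab k l hk hl x, vtx_lab k l hk hl y] at h2
  · have h2 := two_dist k l (lab k l y) (lab k l x) hk hl h (lab_le k l hk hl x)
    rw [vtx_lab k l hk hl x, vtx_lab k l hk hl y] at h2
    rw [SimpleGraph.dist_comm, T_comm]
    exact h2

lemma cardV (k l : ℕ) (hk : 2 ≤ k) (hl : 2 ≤ l) :
    Fintype.card (ThetaV 1 (2*k) (2*l+1)) = 2*k+2*l+1 := by
  simp only [ThetaV, Fintype.card_sum, Fintype.card_fin, Fintype.card_bool]
  omega

end ThetaQEProof

open ThetaQEProof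

/-- For integers `k ≥ 2`, `l ≥ 2`, the theta graph `Θ(1,2k,2l+1)`
is of QE class. -/
theorem theta_one_even_odd_qe (k l : ℕ) (hk : 2 ≤ k) (hl : 2 ≤ l) :
    IsQEClass (thetaGraph 1 (2 * k) (2 * l + 1)) := by
  classical
  refine ⟨fun v => WithLp.toLp 2 (fun i : Fin _ => Real.sqrt ((wC k l i.1 : ℝ)/2) *
      (if loC k l i.1 ≤ lab k l v ∧ lab k l v ≤ hiC k l i.1 then (1:ℝ) else 0)), ?_⟩
  intro x y
  have key : ∀ i : ℕ,
      (Real.sqrt ((wC k l i : ℝ)/2) *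
          (if loC k l i ≤ lab k l x ∧ lab k l x ≤ hiC k l i then (1:ℝ) else 0)
        - Real.sqrt ((wC k l i : ℝ)/2) *
          (if loC k l i ≤ lab k l y ∧ lab k l y ≤ hiC k l i then (1:ℝ) else 0))^2
      = ((wC k l i * sep (loC k l i) (hiC k l i) (lab k l x) (lab k l y) : ℕ) : ℝ)/2 := by
    intro i
    rw [← mul_sub, mul_pow, Real.sq_sqrt (by positivity)]
    unfold sep
    split_ifs <;> first | tauto | (push_cast; ring)
  rw [EuclideanSpace.norm_eq, Real.sq_sqrt (Finset.sum_nonneg fun i _ => sq_nonneg _)]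
  simp only [PiLp.sub_apply, PiLp.toLp_apply, Real.norm_eq_abs, sq_abs, key]
  rw [Fin.sum_univ_eq_sum_range (fun i =>
    ((wC k l i * sep (loC k l i) (hiC k l i) (lab k l x) (lab k l y) : ℕ) : ℝ)/2)]
  rw [cardV k l hk hl]
  rw [← Finset.sum_div, ← Nat.cast_sum]
  rw [show (∑ i ∈ Finset.range (2*k+2*l+1),
      wC k l i * sep (loC k l i) (hiC k l i) (lab k l x) (lab k l y))
      = T k l (lab k l x) (lab k l y) from rfl]
  rw [← dist_T k l hk hl x y]
  push_cast
  ring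
end

section
/- The theta graph Θ(2,3,3) is of QE class. -/
set_option maxHeartbeats 1000000


section Aux

lemma theta_adj_iff (α β γ : ℕ) (u v : ThetaV α β γ) :
    (thetaGraph α β γ).Adj u v ↔
      (u ≠ v ∧ ∃ b : Fin 3, ∃ p ∈ onBranch α β γ u b, ∃ q ∈ onBranch α β γ v b,
        (p + 1 = q ∨ q + 1 = p)) := by
  constructor
  · rintro ⟨hne, b, p, q, hu, hv, h⟩
    exact ⟨hne, b, p, hu, q, hv, h⟩
  · rintro ⟨hne, b, p, hu, q, hv, h⟩
    exact ⟨hne, b, p, q, hu, hv, h⟩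

instance thetaAdjDec (α β γ : ℕ) : DecidableRel (thetaGraph α β γ).Adj := fun u v =>
  decidable_of_iff _ (theta_adj_iff α β γ u v).symm

lemma dist_eq_of {V : Type*} {G : SimpleGraph V} (D : V → V → ℕ)
    (h0 : ∀ x, D x x = 0)
    (hzero : ∀ x y, D x y = 0 → x = y)
    (hstep : ∀ x y z, G.Adj x y → D x z ≤ D y z + 1)
    (hup : ∀ x y, x ≠ y → ∃ z, G.Adj z y ∧ D x z + 1 = D x y)
    (x y : V) : G.dist x y = D x y := by
  have key : ∀ n (x y : V), D x y ≤ n → ∃ p : G.Walk x y, p.length = D x y := by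
    intro n
    induction n with
    | zero =>
      intro x y h
      have hxy := hzero x y (Nat.le_zero.mp h)
      subst hxy
      exact ⟨SimpleGraph.Walk.nil, by simp [h0]⟩
    | succ n ih =>
      intro x y h
      by_cases hxy : x = y
      · subst hxy; exact ⟨SimpleGraph.Walk.nil, by simp [h0]⟩
      · obtain ⟨z, hadj, hz⟩ := hup x y hxy
        obtain ⟨p, hp⟩ := ih x z (by omega)
        exact ⟨p.concat hadj, by rw [SimpleGraph.Walk.length_concat, hp, hz]⟩
  obtain ⟨p, hp⟩ := key (D x y) x y le_rfl
  have hub : G.dist x y ≤ D x y := hp ▸ SimpleGraph.dist_le p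
  have hreach : G.Reachable x y := ⟨p⟩
  obtain ⟨q, hq⟩ := hreach.exists_walk_length_eq_dist
  have hlb : ∀ {a b : V} (w : G.Walk a b), D a b ≤ w.length := by
    intro a b w
    induction w with
    | nil => simp [h0]
    | @cons u' v' w' h w ih =>
      have := hstep u' v' w' h
      simp only [SimpleGraph.Walk.length_cons]
      omega
  exact Nat.le_antisymm hub (hq ▸ hlb q)

def dIdx : ThetaV 2 3 3 → ℕ
  | Sum.inr false => 0
  | Sum.inr true => 1
  | Sum.inl (Sum.inl _) => 2
  | Sum.inl (Sum.inr (Sum.inl j)) => 3 + j.1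
  | Sum.inl (Sum.inr (Sum.inr m)) => 5 + m.1

def dRow0 : ℕ → ℕ
  | 0 => 0
  | 1 => 2
  | 2 => 1
  | 3 => 1
  | 4 => 2
  | 5 => 1
  | _ => 2

def dRow1 : ℕ → ℕ
  | 0 => 2
  | 1 => 0
  | 2 => 1
  | 3 => 2
  | 4 => 1
  | 5 => 2
  | _ => 1

def dRow2 : ℕ → ℕ
  | 0 => 1
  | 1 => 1
  | 2 => 0
  | 3 => 2
  | 4 => 2
  | 5 => 2
  | _ => 2

def dRow3 : ℕ → ℕ
  | 0 => 1
  | 1 => 2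
  | 2 => 2
  | 3 => 0
  | 4 => 1
  | 5 => 2
  | _ => 3

def dRow4 : ℕ → ℕ
  | 0 => 2
  | 1 => 1
  | 2 => 2
  | 3 => 1
  | 4 => 0
  | 5 => 3
  | _ => 2

def dRow5 : ℕ → ℕ
  | 0 => 1
  | 1 => 2
  | 2 => 2
  | 3 => 2
  | 4 => 3
  | 5 => 0
  | _ => 1

def dRow6 : ℕ → ℕ
  | 0 => 2
  | 1 => 1
  | 2 => 2
  | 3 => 3
  | 4 => 2
  | 5 => 1
  | _ => 0

def dTab : ℕ → ℕ → ℕ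
  | 0 => dRow0
  | 1 => dRow1
  | 2 => dRow2
  | 3 => dRow3
  | 4 => dRow4
  | 5 => dRow5
  | _ => dRow6

def Dfun (x y : ThetaV 2 3 3) : ℕ := dTab (dIdx x) (dIdx y)

noncomputable def emb : ThetaV 2 3 3 → EuclideanSpace ℝ (Fin 7)
  | Sum.inr false => WithLp.toLp 2 ![0, 0, 0, 0, 0, 0, 0]
  | Sum.inr true => WithLp.toLp 2 ![1, 1/2, Real.sqrt 3 / 3, 1/2, Real.sqrt 6 / 6, 0, 0]
  | Sum.inl (Sum.inl _) => WithLp.toLp 2 ![1, 0, 0, 0, 0, 0, 0]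
  | Sum.inl (Sum.inr (Sum.inl j)) =>
      if j.1 = 0 then WithLp.toLp 2 ![0, 1, 0, 0, 0, 0, 0] else WithLp.toLp 2 ![1/2, 1, Real.sqrt 3 / 2, 0, 0, 0, 0]
  | Sum.inl (Sum.inr (Sum.inr m)) =>
      if m.1 = 0 then WithLp.toLp 2 ![0, 0, 0, 1, 0, 0, 0] else WithLp.toLp 2 ![1/2, 0, Real.sqrt 3 / 2, 1, 0, 0, 0]

end Aux

/-- The theta graph `Θ(2,3,3)` is of QE class. -/
theorem theta_233_qe : IsQEClass (thetaGraph 2 3 3) := by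
  have hdist : ∀ x y, (thetaGraph 2 3 3).dist x y = Dfun x y :=
    dist_eq_of Dfun (by decide) (by decide) (by decide) (by decide)
  have hcard : Fintype.card (ThetaV 2 3 3) = 7 := rfl
  have h3 : Real.sqrt 3 ^ 2 = 3 := Real.sq_sqrt (by norm_num)
  have h6 : Real.sqrt 6 ^ 2 = 6 := Real.sq_sqrt (by norm_num)
  have hn : ∀ v : EuclideanSpace ℝ (Fin 7), ‖v‖ ^ 2 = ∑ i, v i ^ 2 := by
    intro v
    rw [EuclideanSpace.norm_eq, Real.sq_sqrt (by positivity)]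
    simp [Real.norm_eq_abs, sq_abs]
  unfold IsQEClass
  rw [hcard]
  refine ⟨emb, ?_⟩
  intro x y
  rw [hdist x y, hn]
  fin_cases x <;> fin_cases y <;>
    · simp only [emb, Dfun, dIdx, dTab, dRow0, dRow1, dRow2, dRow3, dRow4, dRow5, dRow6, Fin.sum_univ_succ, Fin.sum_univ_zero,
        PiLp.sub_apply, PiLp.toLp_apply, WithLp.ofLp_toLp, Fin.isValue, Matrix.cons_val_zero, Matrix.cons_val_succ, eq_self_iff_true, Nat.one_ne_zero, if_true, if_false, reduceIte]
      push_cast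
      ring_nf
      try linarith [h3, h6]
end

section
/- The theta graph Θ(2,3,7) is of QE class. -/
namespace Theta237

def idx : ThetaV 2 3 7 → Fin 11
  | Sum.inr false => 0
  | Sum.inr true => 1
  | Sum.inl (Sum.inl _) => 2
  | Sum.inl (Sum.inr (Sum.inl j)) => ⟨3 + j.1, by have := j.2; omega⟩
  | Sum.inl (Sum.inr (Sum.inr k)) => ⟨5 + k.1, by have := k.2; omega⟩

def dmat : Fin 11 → Fin 11 → ℕ :=
  ![![0, 2, 1, 1, 2, 1, 2, 3, 4, 4, 3],
    ![2, 0, 1, 2, 1, 3, 4, 4, 3, 2, 1],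
    ![1, 1, 0, 2, 2, 2, 3, 4, 4, 3, 2],
    ![1, 2, 2, 0, 1, 2, 3, 4, 5, 4, 3],
    ![2, 1, 2, 1, 0, 3, 4, 5, 4, 3, 2],
    ![1, 3, 2, 2, 3, 0, 1, 2, 3, 4, 4],
    ![2, 4, 3, 3, 4, 1, 0, 1, 2, 3, 4],
    ![3, 4, 4, 4, 5, 2, 1, 0, 1, 2, 3],
    ![4, 3, 4, 5, 4, 3, 2, 1, 0, 1, 2],
    ![4, 2, 3, 4, 3, 4, 3, 2, 1, 0, 1],
    ![3, 1, 2, 3, 2, 4, 4, 3, 2, 1, 0]]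

def D (u v : ThetaV 2 3 7) : ℕ := dmat (idx u) (idx v)

def adjB (u v : ThetaV 2 3 7) : Bool :=
  decide (u ≠ v) && (List.finRange 3).any fun b =>
    match onBranch 2 3 7 u b, onBranch 2 3 7 v b with
    | some p, some q => p + 1 == q || q + 1 == p
    | _, _ => false

lemma adj_iff (u v : ThetaV 2 3 7) :
    (thetaGraph 2 3 7).Adj u v ↔ adjB u v = true := by
  unfold adjB
  rw [Bool.and_eq_true, List.any_eq_true]
  constructor
  · rintro ⟨hne, b, p, q, hu, hv, h⟩
    refine ⟨by simpa using hne, b, List.mem_finRange b, ?_⟩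
    rw [hu, hv]
    simpa using h
  · rintro ⟨hne, b, -, h⟩
    refine ⟨by simpa using hne, b, ?_⟩
    rcases hu' : onBranch 2 3 7 u b with _ | p <;>
      rcases hv' : onBranch 2 3 7 v b with _ | q <;>
        rw [hu', hv'] at h <;> simp at h
    exact ⟨p, q, rfl, rfl, by omega⟩

lemma ha : ∀ z : ThetaV 2 3 7, D z z = 0 := by decide
lemma hb : ∀ u v z : ThetaV 2 3 7, adjB u v = true → D u z ≤ D v z + 1 := by decide
lemma hc : ∀ x y : ThetaV 2 3 7, x ≠ y →
    ∃ u, adjB x u = true ∧ D u y + 1 = D x y := by decide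

lemma exists_walk (n : ℕ) : ∀ x y : ThetaV 2 3 7, D x y = n →
    ∃ p : (thetaGraph 2 3 7).Walk x y, p.length = n := by
  induction n with
  | zero =>
    intro x y h
    have hxy : x = y := by
      by_contra hne
      obtain ⟨u, -, he⟩ := hc x y hne
      omega
    subst hxy
    exact ⟨.nil, rfl⟩
  | succ n ih =>
    intro x y h
    have hne : x ≠ y := by
      rintro rfl
      simp [ha] at h
    obtain ⟨u, hu, he⟩ := hc x y hne
    obtain ⟨p, hp⟩ := ih u y (by omega)
    exact ⟨.cons ((adj_iff x u).mpr hu) p, by simp [hp]⟩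

lemma walk_ge {x y : ThetaV 2 3 7} (q : (thetaGraph 2 3 7).Walk x y) :
    D x y ≤ q.length := by
  induction q with
  | nil => simp [ha]
  | @cons a b c h p ih =>
    have h2 := hb a b c ((adj_iff a b).mp h)
    simp only [SimpleGraph.Walk.length_cons]
    omega

lemma dist_eq (x y : ThetaV 2 3 7) : (thetaGraph 2 3 7).dist x y = D x y := by
  obtain ⟨p, hp⟩ := exists_walk (D x y) x y rfl
  refine le_antisymm (hp ▸ SimpleGraph.dist_le p) ?_
  obtain ⟨q, hq⟩ := SimpleGraph.Reachable.exists_walk_length_eq_dist ⟨p⟩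
  calc D x y ≤ q.length := walk_ge q
    _ = _ := hq

def Lz : Fin 11 → Fin 11 → ℤ :=
  ![![60, 0, 0, 0, 0, 0, 0, 0, 0, 0, 0],
    ![0, 60, 0, 0, 0, 0, 0, 0, 0, 0, 0],
    ![0, 30, 60, 0, 0, 0, 0, 0, 0, 0, 0],
    ![0, 15, -30, 60, 0, 0, 0, 0, 0, 0, 0],
    ![0, 45, -30, 40, 60, 0, 0, 0, 0, 0, 0],
    ![0, 0, 0, 0, 0, 60, 0, 0, 0, 0, 0],
    ![0, 0, 0, 0, 0, 60, 60, 0, 0, 0, 0],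
    ![0, 15, -30, -20, -48, 60, 60, 60, 0, 0, 0],
    ![0, 45, -30, -40, 12, 60, 60, 60, 60, 0, 0],
    ![0, 60, 0, 0, 0, 30, 60, 75, 0, 60, 0],
    ![0, 60, 0, 0, 0, 0, 30, 75, 0, -60, 60]]

def wz : Fin 11 → ℤ := ![0, 240, 60, 90, 50, 120, 120, 48, 0, 15, 0]

lemma zfact : ∀ i j : Fin 11,
    ∑ k : Fin 11, (Lz i k - Lz j k) ^ 2 * wz k = (dmat i j : ℤ) * 432000 := by
  decide

lemma hwz : ∀ k : Fin 11, 0 ≤ wz k := by decide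

noncomputable def φ (x : ThetaV 2 3 7) : EuclideanSpace ℝ (Fin 11) :=
  WithLp.toLp 2 (fun k => (Lz (idx x) k : ℝ) / 60 * Real.sqrt ((wz k : ℝ) / 120))

lemma hw (k : Fin 11) : (0 : ℝ) ≤ (wz k : ℝ) / 120 := by
  have := hwz k
  positivity

lemma rfact (i j : Fin 11) :
    ∑ k : Fin 11, ((Lz i k : ℝ) / 60 - (Lz j k : ℝ) / 60) ^ 2 * ((wz k : ℝ) / 120)
      = (dmat i j : ℝ) := by
  have h : ((∑ k : Fin 11, (Lz i k - Lz j k) ^ 2 * wz k : ℤ) : ℝ)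
      = (((dmat i j : ℤ) * 432000 : ℤ) : ℝ) := by exact_mod_cast zfact i j
  push_cast at h
  calc ∑ k : Fin 11, ((Lz i k : ℝ) / 60 - (Lz j k : ℝ) / 60) ^ 2 * ((wz k : ℝ) / 120)
      = (∑ k : Fin 11, ((Lz i k : ℝ) - (Lz j k : ℝ)) ^ 2 * (wz k : ℝ)) / 432000 := by
        rw [Finset.sum_div]
        exact Finset.sum_congr rfl fun k _ => by ring
    _ = (dmat i j : ℝ) := by rw [h]; ring

lemma keynorm (x y : ThetaV 2 3 7) :
    ‖φ x - φ y‖ ^ 2 = (D x y : ℝ) := by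
  rw [EuclideanSpace.norm_eq, Real.sq_sqrt (by positivity)]
  have : ∀ k : Fin 11, ‖(φ x - φ y) k‖ ^ 2
      = ((Lz (idx x) k : ℝ) / 60 - (Lz (idx y) k : ℝ) / 60) ^ 2 * ((wz k : ℝ) / 120) := by
    intro k
    have hsub : (φ x - φ y) k = φ x k - φ y k := rfl
    rw [hsub, Real.norm_eq_abs, sq_abs]
    show ((Lz (idx x) k : ℝ) / 60 * Real.sqrt ((wz k : ℝ) / 120)
        - (Lz (idx y) k : ℝ) / 60 * Real.sqrt ((wz k : ℝ) / 120)) ^ 2 = _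
    rw [← sub_mul, mul_pow, Real.sq_sqrt (hw k)]
  rw [Finset.sum_congr rfl fun k _ => this k, rfact]
  rfl

end Theta237

/-- The theta graph `Θ(2,3,7)` is of QE class. -/
theorem theta_237_qe : IsQEClass (thetaGraph 2 3 7) := by
  exact ⟨Theta237.φ, fun x y => (Theta237.keynorm x y).trans (by rw [Theta237.dist_eq])⟩
end
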